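/- Miller forcing has the constant or one-to-one property: for every Miller tree T and every continuous function f : [T] → 2^ω there is a Miller tree S ⊆ T such that the restriction of f to [S] is either constant or injective. -/

import Mathlib

/-!
If `f` is constant on the branches of `T` through some node `t`, the nodes comparable with `t`
form the required tree. Otherwise `f` takes infinitely many values on every cone of `T`, since
finitely many values would make it locally constant. Then above every node, a splitting node has
infinitely many successors carrying branches with pairwise distinct values; by compactness of
`2^ω` a subsequence of these values has pairwise disjoint neighbourhoods, and by continuity each
successor extends to a node all of whose branches are mapped into its neighbourhood. Fusing these
splitting steps gives a Miller subtree in which two distinct branches split at a common splitting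
step into different children, hence have different values.
-/

/-- The restriction `x↾n` of a sequence `x ∈ ω^ω` to its first `n` values, as a finite sequence. -/
def seqRestrict (x : ℕ → ℕ) (n : ℕ) : List ℕ := List.ofFn fun i : Fin n => x i

/-- A tree on `ω`: a nonempty set of finite sequences closed under initial segments. -/
def IsSeqTree (T : Set (List ℕ)) : Prop :=
  T.Nonempty ∧ ∀ s ∈ T, ∀ t : List ℕ, t <+: s → t ∈ T

/-- `[T]`, the set of branches of a tree `T ⊆ ω^{<ω}`. -/
def branches (T : Set (List ℕ)) : Set (ℕ → ℕ) := {x | ∀ n : ℕ, seqRestrict x n ∈ T}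

/-- `S` and `T` are compatible in `𝕋` (ordered by inclusion) if they have a common extension. -/
def Compat (𝕋 : Set (Set (List ℕ))) (S T : Set (List ℕ)) : Prop :=
  ∃ R ∈ 𝕋, R ⊆ S ∧ R ⊆ T

/-- A Miller tree: a tree in which every node has an extension with infinitely many
immediate successors in the tree. -/
def IsMiller (T : Set (List ℕ)) : Prop :=
  IsSeqTree T ∧ ∀ t ∈ T, ∃ s ∈ T, t <+: s ∧ {n : ℕ | s ++ [n] ∈ T}.Infinite

open Set Filter Topology Function

lemma eq_of_prefix_of_prefix_of_length_eq {α : Type*} {l₁ l₂ w : List α} (h₁ : l₁ <+: w)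
    (h₂ : l₂ <+: w) (h : l₁.length = l₂.length) : l₁ = l₂ :=
  (List.prefix_of_prefix_length_le h₁ h₂ h.le).eq_of_length h

@[simp]
lemma length_seqRestrict (x : ℕ → ℕ) (n : ℕ) : (seqRestrict x n).length = n := by
  simp [seqRestrict]

@[simp]
lemma getElem_seqRestrict (x : ℕ → ℕ) {n i : ℕ} (h : i < (seqRestrict x n).length) :
    (seqRestrict x n)[i] = x i := by
  simp [seqRestrict]

lemma seqRestrict_prefix_seqRestrict (x : ℕ → ℕ) {m n : ℕ} (h : m ≤ n) :
    seqRestrict x m <+: seqRestrict x n :=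
  List.prefix_iff_getElem.mpr ⟨by simpa using h, fun _ _ => by simp⟩

lemma branches_mono {S T : Set (List ℕ)} (h : S ⊆ T) : branches S ⊆ branches T :=
  fun _ hx n => h (hx n)

def cone (t : List ℕ) : Set (ℕ → ℕ) := {x | seqRestrict x t.length = t}

lemma mem_cone_iff {x : ℕ → ℕ} {t : List ℕ} :
    x ∈ cone t ↔ ∀ i (hi : i < t.length), x i = t[i] := by
  refine ⟨fun hx i hi => ?_, fun h => List.ext_getElem (by simp) fun i hi _ => ?_⟩
  · rw [← getElem_seqRestrict x (by simpa using hi)]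
    exact List.getElem_of_eq hx _
  · simpa using h i (by simpa using hi)

lemma cone_seqRestrict (x : ℕ → ℕ) (n : ℕ) : cone (seqRestrict x n) = PiNat.cylinder x n := by
  ext y
  simp [mem_cone_iff]

lemma cone_anti {s t : List ℕ} (h : s <+: t) : cone t ⊆ cone s := fun x hx => by
  rw [mem_cone_iff] at hx ⊢
  intro i hi
  rw [hx i (hi.trans_le h.length_le), h.getElem hi]

lemma prefix_seqRestrict_of_mem_cone {x : ℕ → ℕ} {t : List ℕ} (hx : x ∈ cone t) {n : ℕ}
    (hn : t.length ≤ n) : t <+: seqRestrict x n := by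
  rw [← hx]
  exact seqRestrict_prefix_seqRestrict x hn

lemma eventually_inter_cone_subset {A U : Set (ℕ → ℕ)} {x : ℕ → ℕ} (hU : U ∈ 𝓝[A] x) :
    ∀ᶠ n in atTop, A ∩ cone (seqRestrict x n) ⊆ U := by
  obtain ⟨V, hVo, hxV, hVU⟩ := mem_nhdsWithin.mp hU
  obtain ⟨_, ⟨y, n, rfl⟩, hxy, hyV⟩ :=
    (PiNat.isTopologicalBasis_cylinders _).exists_subset_of_mem_open hxV hVo
  rw [PiNat.mem_cylinder_iff_eq] at hxy
  filter_upwards [eventually_ge_atTop n] with m hm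
  rw [cone_seqRestrict]
  exact fun z ⟨hzA, hz⟩ => hVU ⟨hyV (hxy ▸ PiNat.cylinder_anti x hm hz), hzA⟩

def subtreeThrough (T : Set (List ℕ)) (t : List ℕ) : Set (List ℕ) :=
  {v ∈ T | v <+: t ∨ t <+: v}

lemma subtreeThrough_subset (T : Set (List ℕ)) (t : List ℕ) : subtreeThrough T t ⊆ T :=
  sep_subset _ _

lemma IsMiller.subtreeThrough {T : Set (List ℕ)} (hT : IsMiller T) {t : List ℕ} (ht : t ∈ T) :
    IsMiller (subtreeThrough T t) := by
  refine ⟨⟨⟨t, ht, .inr (List.prefix_refl t)⟩, ?_⟩, ?_⟩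
  · rintro v ⟨hvT, hv⟩ w hwv
    refine ⟨hT.1.2 v hvT w hwv, ?_⟩
    rcases hv with hvt | htv
    · exact .inl (hwv.trans hvt)
    · exact List.prefix_or_prefix_of_prefix hwv htv
  · rintro v ⟨hvT, hv⟩
    obtain ⟨w, hwT, hvw, htw⟩ : ∃ w ∈ T, v <+: w ∧ t <+: w := by
      rcases hv with hvt | htv
      · exact ⟨t, ht, hvt, List.prefix_refl t⟩
      · exact ⟨v, hvT, List.prefix_refl v, htv⟩
    obtain ⟨s, hsT, hws, hinf⟩ := hT.2 w hwT
    refine ⟨s, ⟨hsT, .inr (htw.trans hws)⟩, hvw.trans hws, hinf.mono fun n hn => ?_⟩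
    exact ⟨hn, .inr ((htw.trans hws).trans (List.prefix_append s [n]))⟩

lemma branches_subtreeThrough_subset_cone (T : Set (List ℕ)) (t : List ℕ) :
    branches (subtreeThrough T t) ⊆ cone t := fun x hx => by
  have hlen : (seqRestrict x t.length).length = t.length := length_seqRestrict x _
  rcases (hx t.length).2 with h | h
  · exact h.eq_of_length hlen
  · exact (h.eq_of_length hlen.symm).symm

lemma Set.Subsingleton.exists_eq_of_image {α β : Type*} [Nonempty β] {f : α → β} {s : Set α}
    (hs : (f '' s).Subsingleton) : ∃ y, ∀ x ∈ s, f x = y := by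
  rcases s.eq_empty_or_nonempty with rfl | ⟨x₀, hx₀⟩
  · exact ⟨Classical.arbitrary β, by simp⟩
  · exact ⟨f x₀, fun x hx => hs (mem_image_of_mem f hx) (mem_image_of_mem f hx₀)⟩

/-- Each new point is taken inside the neighbourhoods of `a` that were separated from the
earlier points. -/
lemma exists_pairwise_disjoint_nhds_of_mapClusterPt {X : Type*} [TopologicalSpace X] [T2Space X]
    {v : ℕ → X} (hv : Injective v) {a : X} (ha : MapClusterPt a atTop v) :
    ∃ m : ℕ → ℕ, ∃ U : ℕ → Set X, (∀ i, IsOpen (U i) ∧ v (m i) ∈ U i) ∧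
      Pairwise (Disjoint on U) := by
  let P : ℕ × Set X × Set X → Prop := fun p =>
    IsOpen p.2.1 ∧ IsOpen p.2.2 ∧ v p.1 ∈ p.2.1 ∧ a ∈ p.2.2 ∧ Disjoint p.2.1 p.2.2
  have hnext : ∀ s : Finset (ℕ × Set X × Set X), (∀ p ∈ s, P p) →
      ∃ q, P q ∧ ∀ p ∈ s, q.2.1 ⊆ p.2.2 := by
    intro s hs
    have hWo : IsOpen (⋂ p ∈ s, p.2.2) := isOpen_biInter_finset fun p hp => (hs p hp).2.1
    have hW : ⋂ p ∈ s, p.2.2 ∈ 𝓝 a := hWo.mem_nhds (mem_iInter₂.mpr fun p hp => (hs p hp).2.2.2.1)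
    have hne : ∀ᶠ n in atTop, v n ≠ a := by
      rw [← Nat.cofinite_eq_atTop]
      exact hv.tendsto_cofinite.eventually (eventually_cofinite_ne a)
    obtain ⟨n, hnW, hna⟩ := ((mapClusterPt_iff_frequently.mp ha _ hW).and_eventually hne).exists
    obtain ⟨U, V, hUo, hVo, hnU, haV, hUV⟩ := t2_separation hna
    refine ⟨(n, U ∩ ⋂ p ∈ s, p.2.2, V), ⟨hUo.inter hWo, hVo, ⟨hnU, hnW⟩, haV,
      hUV.mono_left inter_subset_left⟩, fun p hp => ?_⟩
    exact inter_subset_right.trans (biInter_subset_of_mem hp)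
  obtain ⟨e, he, hlt⟩ := exists_seq_of_forall_finset_exists P _ hnext
  refine ⟨fun i => (e i).1, fun i => (e i).2.1, fun i => ⟨(he i).1, (he i).2.2.1⟩, ?_⟩
  exact (pairwise_disjoint_on _).mpr fun i j hij => (he i).2.2.2.2.mono_right (hlt i j hij)

structure SplitFamily (T : Set (List ℕ)) (t : List ℕ) where
  split : List ℕ
  index : ℕ → ℕ
  child : ℕ → List ℕ
  prefix_split : t <+: split
  injective_index : Injective index
  prefix_child (i : ℕ) : split ++ [index i] <+: child i
  child_mem (i : ℕ) : child i ∈ T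

namespace SplitFamily

variable {T : Set (List ℕ)} {t : List ℕ} (F : SplitFamily T t)

lemma length_lt_length_child (i : ℕ) : t.length < (F.child i).length := by
  have h₁ := F.prefix_split.length_le
  have h₂ := (F.prefix_child i).length_le
  simp only [List.length_append, List.length_singleton] at h₂
  omega

lemma eq_of_prefix_child {i j : ℕ} {w : List ℕ} (hi : F.split ++ [F.index i] <+: w)
    (hj : F.child j <+: w) : i = j := by
  have h := eq_of_prefix_of_prefix_of_length_eq hi ((F.prefix_child j).trans hj) (by simp)
  exact F.injective_index (by simpa using h)

def childNode (i : ℕ) : {s // s ∈ T} := ⟨F.child i, F.child_mem i⟩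

end SplitFamily

/-- The node with address `u ∈ ω^{<ω}` in the fusion tree rooted at `r`. -/
def fusionNode {T : Set (List ℕ)} (F : ∀ t : {t // t ∈ T}, SplitFamily T t) :
    List ℕ → {t // t ∈ T} → {t // t ∈ T}
  | [], r => r
  | i :: u, r => fusionNode F u ((F r).childNode i)

def fusion {T : Set (List ℕ)} (F : ∀ t : {t // t ∈ T}, SplitFamily T t) (r : {t // t ∈ T}) :
    Set (List ℕ) :=
  {v | ∃ u, v <+: (fusionNode F u r).1}

section Fusion

variable {T : Set (List ℕ)} (F : ∀ t : {t // t ∈ T}, SplitFamily T t)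

lemma fusionNode_append (u w : List ℕ) (r : {t // t ∈ T}) :
    fusionNode F (u ++ w) r = fusionNode F w (fusionNode F u r) := by
  induction u generalizing r with
  | nil => rfl
  | cons i u ih => exact ih _

lemma fusionNode_append_singleton (u : List ℕ) (i : ℕ) (r : {t // t ∈ T}) :
    (fusionNode F (u ++ [i]) r).1 = (F (fusionNode F u r)).child i := by
  rw [fusionNode_append]
  rfl

lemma prefix_fusionNode (u : List ℕ) (r : {t // t ∈ T}) : r.1 <+: (fusionNode F u r).1 := by
  induction u generalizing r with
  | nil => exact List.prefix_refl _
  | cons i u ih => exact (((F r).prefix_split.trans (List.prefix_append _ _)).trans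
      ((F r).prefix_child i)).trans (ih ((F r).childNode i))

lemma split_append_index_prefix_fusionNode (u : List ℕ) (i : ℕ) (r : {t // t ∈ T}) :
    (F (fusionNode F u r)).split ++ [(F (fusionNode F u r)).index i]
      <+: (fusionNode F (u ++ [i]) r).1 :=
  fusionNode_append_singleton F u i r ▸ (F _).prefix_child i

lemma length_add_le_length_fusionNode (u : List ℕ) (r : {t // t ∈ T}) :
    r.1.length + u.length ≤ (fusionNode F u r).1.length := by
  induction u generalizing r with
  | nil => simp [fusionNode]
  | cons i u ih =>
    have h₁ := (F r).length_lt_length_child i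
    have h₂ : ((F r).child i).length + u.length ≤ (fusionNode F u ((F r).childNode i)).1.length :=
      ih ((F r).childNode i)
    simp only [fusionNode, List.length_cons]
    omega

lemma fusionNode_prefix_fusionNode_iff {u u' : List ℕ} {r : {t // t ∈ T}} :
    (fusionNode F u r).1 <+: (fusionNode F u' r).1 ↔ u <+: u' := by
  refine ⟨fun h => ?_, fun ⟨w, hw⟩ => hw ▸ fusionNode_append F u w r ▸ prefix_fusionNode F _ _⟩
  induction u generalizing u' r with
  | nil => exact List.nil_prefix
  | cons i u ih =>
    have hi : (F r).split ++ [(F r).index i] <+: (fusionNode F (i :: u) r).1 :=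
      ((F r).prefix_child i).trans (prefix_fusionNode F u ((F r).childNode i))
    cases u' with
    | nil =>
      have h₁ := (F r).length_lt_length_child i
      have h₂ : ((F r).child i).length + u.length
          ≤ (fusionNode F u ((F r).childNode i)).1.length :=
        length_add_le_length_fusionNode F u ((F r).childNode i)
      have h₃ := h.length_le
      simp only [fusionNode] at h₃
      omega
    | cons j u' =>
      obtain rfl : i = j :=
        (F r).eq_of_prefix_child (hi.trans h) (prefix_fusionNode F u' ((F r).childNode j))
      exact List.cons_prefix_cons.mpr ⟨rfl, ih h⟩

lemma fusion_subset (hT : IsSeqTree T) (r : {t // t ∈ T}) : fusion F r ⊆ T :=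
  fun _ ⟨u, hv⟩ => hT.2 _ (fusionNode F u r).2 _ hv

lemma isMiller_fusion (r : {t // t ∈ T}) : IsMiller (fusion F r) := by
  refine ⟨⟨⟨r.1, [], List.prefix_refl _⟩, fun v ⟨u, hv⟩ w hw => ⟨u, hw.trans hv⟩⟩, ?_⟩
  rintro v ⟨u, hv⟩
  have hchild : ∀ i, (F (fusionNode F u r)).split ++ [(F (fusionNode F u r)).index i]
      ∈ fusion F r := fun i => ⟨u ++ [i], split_append_index_prefix_fusionNode F u i r⟩
  refine ⟨_, ⟨u ++ [0], (List.prefix_append _ _).trans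
    (split_append_index_prefix_fusionNode F u 0 r)⟩,
    hv.trans (F _).prefix_split, ?_⟩
  exact (infinite_range_of_injective (F _).injective_index).mono (range_subset_iff.mpr hchild)

end Fusion

section FusionBranches

variable {T : Set (List ℕ)} (F : ∀ t : {t // t ∈ T}, SplitFamily T t) {r : {t // t ∈ T}}
  {x y : ℕ → ℕ}

lemma mem_cone_of_mem_branches_fusion (hx : x ∈ branches (fusion F r)) : x ∈ cone r.1 := by
  obtain ⟨u, hu⟩ := hx r.1.length
  exact eq_of_prefix_of_prefix_of_length_eq hu (prefix_fusionNode F u r) (length_seqRestrict _ _)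

lemma exists_prefix_of_mem_branches_fusion (hx : x ∈ branches (fusion F r)) {u : List ℕ}
    (hu : x ∈ cone (fusionNode F u r).1) {M : ℕ} (hM : (fusionNode F u r).1.length < M) :
    ∃ i w, seqRestrict x M <+: w ∧ (fusionNode F (u ++ [i]) r).1 <+: w := by
  obtain ⟨u', hu'⟩ := hx M
  obtain ⟨_ | ⟨i, w⟩, rfl⟩ : u <+: u' := (fusionNode_prefix_fusionNode_iff F).mp
    ((prefix_seqRestrict_of_mem_cone hu hM.le).trans hu')
  · have := (List.append_nil u ▸ hu').length_le
    simp only [length_seqRestrict] at this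
    omega
  · exact ⟨i, _, hu', (fusionNode_prefix_fusionNode_iff F).mpr ⟨w, by simp⟩⟩

lemma exists_mem_cone_fusionNode_append_singleton (hx : x ∈ branches (fusion F r))
    {u : List ℕ} (hu : x ∈ cone (fusionNode F u r).1) :
    ∃ i, x ∈ cone (fusionNode F (u ++ [i]) r).1 := by
  set G := F (fusionNode F u r)
  -- Beyond `G.split`, a common extension of `x↾M` and a child pins down the successor of
  -- `G.split` that `x` takes.
  have hidx : ∀ M i w, G.split.length < M → seqRestrict x M <+: w →
      (fusionNode F (u ++ [i]) r).1 <+: w →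
      seqRestrict x (G.split.length + 1) = G.split ++ [G.index i] := fun M i w hM hxw hiw =>
    eq_of_prefix_of_prefix_of_length_eq ((seqRestrict_prefix_seqRestrict x hM).trans hxw)
      ((split_append_index_prefix_fusionNode F u i r).trans hiw) (by simp)
  have hlt : (fusionNode F u r).1.length < G.split.length + 1 :=
    Nat.lt_succ_of_le G.prefix_split.length_le
  obtain ⟨i, w, hxw, hiw⟩ := exists_prefix_of_mem_branches_fusion F hx hu hlt
  have hi := hidx _ i w (Nat.lt_succ_self _) hxw hiw
  have hc : G.split.length < (fusionNode F (u ++ [i]) r).1.length := by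
    have : (G.split ++ [G.index i]).length ≤ (fusionNode F (u ++ [i]) r).1.length :=
      (split_append_index_prefix_fusionNode F u i r).length_le
    simp only [List.length_append, List.length_singleton] at this
    omega
  obtain ⟨j, w', hxw', hjw'⟩ :=
    exists_prefix_of_mem_branches_fusion F hx hu (hlt.trans_le (Nat.succ_le_of_lt hc))
  obtain rfl : j = i := G.injective_index (by simpa using (hidx _ j w' hc hxw' hjw').symm.trans hi)
  exact ⟨j, eq_of_prefix_of_prefix_of_length_eq hxw' hjw' (length_seqRestrict _ _)⟩

lemma exists_fork_of_ne (hx : x ∈ branches (fusion F r)) (hy : y ∈ branches (fusion F r))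
    (hxy : x ≠ y) : ∃ u i j, i ≠ j ∧ x ∈ cone (fusionNode F (u ++ [i]) r).1 ∧
      y ∈ cone (fusionNode F (u ++ [j]) r).1 := by
  by_contra! hfork
  have hcommon : ∀ n, ∃ u : List ℕ, u.length = n ∧
      x ∈ cone (fusionNode F u r).1 ∧ y ∈ cone (fusionNode F u r).1 := by
    intro n
    induction n with
    | zero => exact ⟨[], rfl, mem_cone_of_mem_branches_fusion F hx,
        mem_cone_of_mem_branches_fusion F hy⟩
    | succ n ih =>
      obtain ⟨u, rfl, hxu, hyu⟩ := ih
      obtain ⟨i, hi⟩ := exists_mem_cone_fusionNode_append_singleton F hx hxu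
      obtain ⟨j, hj⟩ := exists_mem_cone_fusionNode_append_singleton F hy hyu
      obtain rfl : i = j := by_contra fun hij => hfork u i j hij hi hj
      exact ⟨u ++ [i], by simp, hi, hj⟩
  obtain ⟨d, hd⟩ := Function.ne_iff.mp hxy
  obtain ⟨u, hu, hxu, hyu⟩ := hcommon (d + 1)
  have hlen : d < (fusionNode F u r).1.length := by
    have := length_add_le_length_fusionNode F u r
    omega
  exact hd ((mem_cone_iff.mp hxu d hlen).trans (mem_cone_iff.mp hyu d hlen).symm)

lemma injOn_fusion {β : Type*} {f : (ℕ → ℕ) → β} (hT : IsSeqTree T)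
    (hF : ∀ t, Pairwise (Disjoint on fun i => f '' (branches T ∩ cone ((F t).child i))))
    (r : {t // t ∈ T}) : InjOn f (branches (fusion F r)) := by
  intro x hx y hy hfxy
  by_contra hxy
  obtain ⟨u, i, j, hij, hxi, hyj⟩ := exists_fork_of_ne F hx hy hxy
  have hsub := branches_mono (fusion_subset F hT r)
  rw [fusionNode_append_singleton] at hxi hyj
  exact (hF _ hij).ne_of_mem (mem_image_of_mem f ⟨hsub hx, hxi⟩)
    (mem_image_of_mem f ⟨hsub hy, hyj⟩) hfxy

end FusionBranches

section Continuity

variable {T : Set (List ℕ)} {β : Type*} [TopologicalSpace β] {f : (ℕ → ℕ) → β}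

/-- If `f` took only finitely many values on `[T] ∩ [t]`, continuity would make it constant on
a smaller cone `[x↾n]`. -/
lemma infinite_image_inter_cone [T1Space β] (hf : ContinuousOn f (branches T))
    (hnt : ∀ t ∈ T, (f '' (branches T ∩ cone t)).Nontrivial) {t : List ℕ} (ht : t ∈ T) :
    (f '' (branches T ∩ cone t)).Infinite := by
  intro hfin
  obtain ⟨_, ⟨x, ⟨hxT, hxt⟩, rfl⟩, -⟩ := hnt t ht
  have hU : f ⁻¹' (f '' (branches T ∩ cone t) \ {f x})ᶜ ∈ 𝓝[branches T] x :=
    hf x hxT (hfin.sdiff.isClosed.isOpen_compl.mem_nhds (by simp))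
  obtain ⟨n, hnU, hn⟩ :=
    ((eventually_inter_cone_subset hU).and (eventually_ge_atTop t.length)).exists
  have hconst : ∀ y ∈ branches T ∩ cone (seqRestrict x n), f y = f x := fun y hy => by
    by_contra hne
    exact hnU hy ⟨mem_image_of_mem f
      ⟨hy.1, cone_anti (prefix_seqRestrict_of_mem_cone hxt hn) hy.2⟩, hne⟩
  refine (hnt _ (hxT n)).not_subsingleton ?_
  rintro _ ⟨y, hy, rfl⟩ _ ⟨z, hz, rfl⟩
  rw [hconst y hy, hconst z hz]

/-- The children are cut from branches through distinct successors of a splitting node with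
distinct values: a subsequence of the values has disjoint neighbourhoods `U i`, and continuity
makes all branches through the `i`-th child land in `U i`. -/
lemma exists_splitFamily_pairwise_disjoint_image [CompactSpace β] [T2Space β] (hT : IsMiller T)
    (hf : ContinuousOn f (branches T))
    (hnt : ∀ t ∈ T, (f '' (branches T ∩ cone t)).Nontrivial) {t : List ℕ} (ht : t ∈ T) :
    ∃ F : SplitFamily T t,
      Pairwise (Disjoint on fun i => f '' (branches T ∩ cone (F.child i))) := by
  classical
  obtain ⟨s, hsT, hts, hinf⟩ := hT.2 t ht
  let r : ℕ × (ℕ → ℕ) → ℕ × (ℕ → ℕ) → Prop := fun p q => p.1 ≠ q.1 ∧ f p.2 ≠ f q.2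
  have : Std.Symm r := ⟨fun _ _ h => ⟨h.1.symm, h.2.symm⟩⟩
  obtain ⟨p, hp, hpr⟩ := exists_seq_of_forall_finset_exists'
    (fun p : ℕ × (ℕ → ℕ) => p.2 ∈ branches T ∩ cone (s ++ [p.1])) r fun P _ => by
      obtain ⟨n, hnT, hnP⟩ := hinf.exists_notMem_finset (P.image Prod.fst)
      obtain ⟨_, ⟨x, hx, rfl⟩, hxP⟩ :=
        (infinite_image_inter_cone hf hnt hnT).exists_notMem_finset (P.image fun p => f p.2)
      exact ⟨(n, x), hx, fun q hq => ⟨fun h => hnP (Finset.mem_image.mpr ⟨q, hq, h⟩),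
        fun h => hxP (Finset.mem_image.mpr ⟨q, hq, h⟩)⟩⟩
  obtain ⟨a, -, ha⟩ := isCompact_univ.exists_mapClusterPt (f := atTop)
    (u := fun k => f (p k).2) (by simp)
  obtain ⟨m, U, hU, hdisj⟩ := exists_pairwise_disjoint_nhds_of_mapClusterPt
    (fun k l h => by_contra fun hkl => (hpr hkl).2 h) ha
  have hm : Injective m := fun i j h => by_contra fun hij =>
    (hdisj hij).ne_of_mem (hU i).2 (h ▸ (hU j).2) rfl
  have hcut : ∀ i, ∃ k, branches T ∩ cone (seqRestrict (p (m i)).2 k) ⊆ f ⁻¹' U i ∧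
      (s ++ [(p (m i)).1]).length ≤ k := fun i =>
    ((eventually_inter_cone_subset (hf _ (hp (m i)).1 ((hU i).1.mem_nhds (hU i).2))).and
      (eventually_ge_atTop _)).exists
  choose k hkU hks using hcut
  refine ⟨{ split := s
            index := fun i => (p (m i)).1
            child := fun i => seqRestrict (p (m i)).2 (k i)
            prefix_split := hts
            injective_index := fun i j h => hm (by_contra fun hij => (hpr hij).1 h)
            prefix_child := fun i => prefix_seqRestrict_of_mem_cone (hp (m i)).2 (hks i)
            child_mem := fun i => (hp (m i)).1 (k i) }, fun i j hij => ?_⟩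
  exact (hdisj hij).mono (image_subset_iff.mpr (hkU i)) (image_subset_iff.mpr (hkU j))

end Continuity

/-- Miller forcing has the constant or one-to-one property: for every Miller tree `T` and
every continuous `f : [T] → 2^ω` there is a Miller tree `S ⊆ T` on which `f` is constant
or injective. -/
theorem miller_constant_or_one_to_one (T : Set (List ℕ)) (hT : IsMiller T)
    (f : (ℕ → ℕ) → (ℕ → Bool)) (hf : ContinuousOn f (branches T)) :
    ∃ S : Set (List ℕ), IsMiller S ∧ S ⊆ T ∧
      ((∃ y : ℕ → Bool, ∀ x ∈ branches S, f x = y) ∨ Set.InjOn f (branches S)) := by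
  by_cases hconst : ∃ t ∈ T, (f '' (branches T ∩ cone t)).Subsingleton
  · obtain ⟨t, ht, hsub⟩ := hconst
    refine ⟨subtreeThrough T t, hT.subtreeThrough ht, subtreeThrough_subset T t, .inl ?_⟩
    refine Set.Subsingleton.exists_eq_of_image (hsub.anti (image_mono fun x hx => ?_))
    exact ⟨branches_mono (subtreeThrough_subset T t) hx, branches_subtreeThrough_subset_cone T t hx⟩
  · push Not at hconst
    choose F hF using fun t : {t // t ∈ T} =>
      exists_splitFamily_pairwise_disjoint_image hT hf hconst t.2
    obtain ⟨r, hr⟩ := hT.1.1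
    exact ⟨fusion F ⟨r, hr⟩, isMiller_fusion F _, fusion_subset F hT.1 _,
      .inr (injOn_fusion F hT.1 hF _)⟩
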